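/- Let q ∈ ℂ ∖ {0} be not a root of unity, let γ₁, γ₂ ∈ ℂ(s) be nonzero, and set γ = γ₁/γ₂. Assume there exists a ∈ ℂ ∖ {0} such that either (a is a pole of γ^{ι₁}/γ and for every n ∈ ℤ the point qⁿ·a is not a zero of γ^{ι₁}/γ) or (a is a zero of γ^{ι₁}/γ and for every n ∈ ℤ the point qⁿ·a is not a pole of γ^{ι₁}/γ). Then the only pair (h₁, h₂) ∈ ℂ(s)² satisfying γ₁·h₁ + γ₂·h₂ = 0 with h₁^{ι₁} = −h₁ and h₂^{ι₂} = −h₂ is (h₁, h₂) = (0, 0). -/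

import Mathlib

/-!
Put `v = γ h₁`, so that `h₂ = -v`. The two symmetries give `v^{ι₁} = -u v` with
`u = γ^{ι₁}/γ`, and `v^{ι₂} = -v`. Since `s ↦ c/s` carries the order of vanishing at `c/a` to
the order at `a`, comparing orders yields `ord_{q c} v = ord_c u + ord_c v` for every `c ≠ 0`.
Along the orbit `qⁿ a`, which is infinite because `q` is not a root of unity, the sequence
`n ↦ ord_{qⁿ a} v` is therefore finitely supported with increments `ord_{qⁿ a} u`. The hypothesis
makes these increments all of one sign, so the sequence is monotone, hence zero, and yet the
increment at `n = 0` is nonzero.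
-/

noncomputable section

def IsPole (h : RatFunc ℂ) (a : ℂ) : Prop := h.denom.eval a = 0

def IsZero (h : RatFunc ℂ) (a : ℂ) : Prop := h.num.eval a = 0

open scoped Polynomial

namespace Polynomial

variable {K : Type*} [Field K]

theorem reflect_one_X_sub_C {b : K} (hb : b ≠ 0) :
    reflect 1 (X - C b) = C (-b) * (X - C b⁻¹) := by
  rw [reflect_sub, reflect_one_X, reflect_C, pow_one, mul_sub, ← C_mul, neg_mul,
    mul_inv_cancel₀ hb, map_neg, map_neg, map_one]
  ring

theorem X_sub_C_pow_dvd_reflect {b : K} (hb : b ≠ 0) :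
    ∀ {n N : ℕ} {p : K[X]}, p.natDegree ≤ N → (X - C b) ^ n ∣ p →
      (X - C b⁻¹) ^ n ∣ reflect N p
  | 0, _, _, _, _ => by simp
  | n + 1, N, p, hp, hdvd => by
    obtain ⟨t, rfl⟩ := hdvd
    rcases eq_or_ne t 0 with rfl | ht
    · simp
    rw [pow_succ' (X - C b), mul_assoc] at hp ⊢
    rw [natDegree_mul (X_sub_C_ne_zero b) (mul_ne_zero (pow_ne_zero _ (X_sub_C_ne_zero b)) ht),
      natDegree_X_sub_C] at hp
    have hdeg : ((X - C b) ^ n * t).natDegree ≤ N - 1 := by omega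
    rw [show N = 1 + (N - 1) by omega, reflect_mul _ _ (natDegree_X_sub_C b).le hdeg,
      reflect_one_X_sub_C hb, pow_succ']
    exact mul_dvd_mul (dvd_mul_left _ _) (X_sub_C_pow_dvd_reflect hb hdeg (dvd_mul_right _ _))

theorem rootMultiplicity_reflect {a : K} (ha : a ≠ 0) {N : ℕ} {p : K[X]} (hp : p.natDegree ≤ N) :
    (reflect N p).rootMultiplicity a = p.rootMultiplicity a⁻¹ := by
  rcases eq_or_ne p 0 with rfl | hp0
  · simp
  have hrp : reflect N p ≠ 0 := reflect_eq_zero_iff.not.mpr hp0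
  refine le_antisymm ?_ ?_
  · rw [le_rootMultiplicity_iff hp0]
    simpa using X_sub_C_pow_dvd_reflect ha (natDegree_reflect_le.trans (max_le le_rfl hp))
      (pow_rootMultiplicity_dvd (reflect N p) a)
  · rw [le_rootMultiplicity_iff hrp]
    simpa using X_sub_C_pow_dvd_reflect (inv_ne_zero ha) hp (pow_rootMultiplicity_dvd p a⁻¹)

end Polynomial

namespace RatFunc

variable {K : Type*} [Field K]

def orderAt (f : RatFunc K) (a : K) : ℤ :=
  (f.num.rootMultiplicity a : ℤ) - f.denom.rootMultiplicity a

theorem orderAt_div_algebraMap {p r : K[X]} (hp : p ≠ 0) (hr : r ≠ 0) (a : K) :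
    orderAt (algebraMap K[X] (RatFunc K) p / algebraMap K[X] (RatFunc K) r) a =
      (p.rootMultiplicity a : ℤ) - r.rootMultiplicity a := by
  set f := algebraMap K[X] (RatFunc K) p / algebraMap K[X] (RatFunc K) r
  have hf : f ≠ 0 := div_ne_zero (algebraMap_ne_zero hp) (algebraMap_ne_zero hr)
  have key := congrArg (Polynomial.rootMultiplicity a)
    ((num_mul_eq_mul_denom_iff (x := f) (p := p) hr).mpr rfl)
  rw [Polynomial.rootMultiplicity_mul (mul_ne_zero (num_ne_zero hf) hr),
    Polynomial.rootMultiplicity_mul (mul_ne_zero hp f.denom_ne_zero)] at key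
  unfold orderAt
  omega

theorem orderAt_mul {f g : RatFunc K} (hf : f ≠ 0) (hg : g ≠ 0) (a : K) :
    orderAt (f * g) a = orderAt f a + orderAt g a := by
  have e : f * g = algebraMap K[X] (RatFunc K) (f.num * g.num) /
      algebraMap K[X] (RatFunc K) (f.denom * g.denom) := by
    rw [map_mul, map_mul, ← div_mul_div_comm, num_div_denom, num_div_denom]
  rw [e, orderAt_div_algebraMap (mul_ne_zero (num_ne_zero hf) (num_ne_zero hg))
      (mul_ne_zero f.denom_ne_zero g.denom_ne_zero),
    Polynomial.rootMultiplicity_mul (mul_ne_zero (num_ne_zero hf) (num_ne_zero hg)),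
    Polynomial.rootMultiplicity_mul (mul_ne_zero f.denom_ne_zero g.denom_ne_zero)]
  unfold orderAt
  push_cast
  ring

theorem orderAt_div {f g : RatFunc K} (hf : f ≠ 0) (hg : g ≠ 0) (a : K) :
    orderAt (f / g) a = orderAt f a - orderAt g a := by
  rw [eq_sub_iff_add_eq, ← orderAt_mul (div_ne_zero hf hg) hg, div_mul_cancel₀ f hg]

theorem orderAt_neg (f : RatFunc K) (a : K) : orderAt (-f) a = orderAt f a := by
  rcases eq_or_ne f 0 with rfl | hf
  · rw [neg_zero]
  have e : -f = algebraMap K[X] (RatFunc K) (Polynomial.C (-1) * f.num) /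
      algebraMap K[X] (RatFunc K) f.denom := by
    rw [map_mul, algebraMap_C, map_neg, map_one, neg_one_mul, neg_div, num_div_denom]
  rw [e, orderAt_div_algebraMap (mul_ne_zero (by simp) (num_ne_zero hf)) f.denom_ne_zero,
    Polynomial.rootMultiplicity_mul (mul_ne_zero (by simp) (num_ne_zero hf)),
    Polynomial.rootMultiplicity_C, zero_add, orderAt]

theorem finite_support_orderAt (f : RatFunc K) : (Function.support f.orderAt).Finite := by
  classical
  refine (f.num.roots + f.denom.roots).toFinset.finite_toSet.subset fun a ha => ?_
  simp only [Function.mem_support, orderAt] at ha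
  simp only [Finset.mem_coe, Multiset.mem_toFinset, ← Multiset.count_pos, Multiset.count_add,
    Polynomial.count_roots]
  omega

theorem orderAt_nonpos {f : RatFunc K} {a : K} (h : ¬ f.num.IsRoot a) : orderAt f a ≤ 0 := by
  simp [orderAt, Polynomial.rootMultiplicity_eq_zero h]

theorem orderAt_nonneg {f : RatFunc K} {a : K} (h : ¬ f.denom.IsRoot a) : 0 ≤ orderAt f a := by
  simp [orderAt, Polynomial.rootMultiplicity_eq_zero h]

theorem orderAt_ne_zero {f : RatFunc K} (hf : f ≠ 0) {a : K}
    (h : f.num.IsRoot a ∨ f.denom.IsRoot a) : orderAt f a ≠ 0 := by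
  have not_both : ¬ (f.num.IsRoot a ∧ f.denom.IsRoot a) := fun ⟨hn, hd⟩ => by
    obtain ⟨u, v, huv⟩ := f.isCoprime_num_denom
    simpa [hn.eq_zero, hd.eq_zero] using congrArg (Polynomial.eval a) huv
  rcases h with h | h
  · have := (Polynomial.rootMultiplicity_pos (num_ne_zero hf)).mpr h
    simp only [orderAt, Polynomial.rootMultiplicity_eq_zero fun h' => not_both ⟨h, h'⟩]
    omega
  · have := (Polynomial.rootMultiplicity_pos f.denom_ne_zero).mpr h
    simp only [orderAt, Polynomial.rootMultiplicity_eq_zero fun h' => not_both ⟨h', h⟩]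
    omega

theorem aeval_inv_X_mul_X_pow {p : K[X]} {N : ℕ} (hp : p.natDegree ≤ N) :
    Polynomial.aeval X⁻¹ p * X ^ N = algebraMap K[X] (RatFunc K) (Polynomial.reflect N p) := by
  have : Invertible (X : RatFunc K) := invertibleOfNonzero X_ne_zero
  have key := Polynomial.eval₂_reflect_mul_pow (algebraMap K (RatFunc K)) X N
    (Polynomial.reflect N p) (Polynomial.natDegree_reflect_le.trans (max_le le_rfl hp))
  rw [Polynomial.reflect_reflect, invOf_eq_inv] at key
  rw [Polynomial.aeval_def, key, ← aeval_X_left_eq_algebraMap, Polynomial.aeval_def]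

variable {F : Type*} [FunLike F (RatFunc K) (RatFunc K)] [AlgHomClass F K (RatFunc K) (RatFunc K)]

theorem orderAt_map_algebraMap {φ : F} {c : K} (hc : c ≠ 0) (hφ : φ X = C c * X⁻¹)
    {p : K[X]} (hp : p ≠ 0) {a : K} (ha : a ≠ 0) :
    orderAt (φ (algebraMap K[X] (RatFunc K) p)) a = p.rootMultiplicity (c / a) := by
  set P := p.comp (Polynomial.C c * Polynomial.X)
  have hP : P ≠ 0 :=
    (Polynomial.comp_C_mul_X_eq_zero_iff (mem_nonZeroDivisors_of_ne_zero hc)).not.mpr hp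
  have hφp : φ (algebraMap K[X] (RatFunc K) p) =
      algebraMap K[X] (RatFunc K) (Polynomial.reflect P.natDegree P) /
        algebraMap K[X] (RatFunc K) (Polynomial.X ^ P.natDegree) := by
    rw [eq_div_iff (algebraMap_ne_zero (pow_ne_zero _ Polynomial.X_ne_zero)), map_pow,
      algebraMap_X, ← aeval_inv_X_mul_X_pow le_rfl, ← aeval_X_left_eq_algebraMap,
      ← Polynomial.aeval_algHom_apply, hφ, Polynomial.aeval_comp]
    simp
  have hXpow : (Polynomial.X ^ P.natDegree : K[X]).rootMultiplicity a = 0 :=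
    Polynomial.rootMultiplicity_eq_zero (by simp [ha])
  have hscale : P.rootMultiplicity a⁻¹ = p.rootMultiplicity (c * a⁻¹) := by
    simpa using Polynomial.rootMultiplicity_comp_C_mul_X_add_C p c 0 a⁻¹ (IsUnit.mk0 c hc)
  rw [hφp, orderAt_div_algebraMap (Polynomial.reflect_eq_zero_iff.not.mpr hP)
      (pow_ne_zero _ Polynomial.X_ne_zero), Polynomial.rootMultiplicity_reflect ha le_rfl,
    hXpow, hscale, div_eq_mul_inv, Nat.cast_zero, sub_zero]

theorem orderAt_map {φ : F} {c : K} (hc : c ≠ 0) (hφ : φ X = C c * X⁻¹)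
    {f : RatFunc K} (hf : f ≠ 0) {a : K} (ha : a ≠ 0) :
    orderAt (φ f) a = orderAt f (c / a) := by
  have hφ_ne {p : K[X]} (hp : p ≠ 0) : φ (algebraMap K[X] (RatFunc K) p) ≠ 0 :=
    (map_ne_zero φ).mpr (algebraMap_ne_zero hp)
  rw [← num_div_denom f, map_div₀, orderAt_div (hφ_ne (num_ne_zero hf)) (hφ_ne f.denom_ne_zero),
    orderAt_map_algebraMap hc hφ (num_ne_zero hf) ha,
    orderAt_map_algebraMap hc hφ f.denom_ne_zero ha,
    orderAt_div_algebraMap (num_ne_zero hf) f.denom_ne_zero]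

theorem orderAt_mul_point_eq_add {q : K} (hq : q ≠ 0) {ι₁ ι₂ : F} (hι₁ : ι₁ X = X⁻¹)
    (hι₂ : ι₂ X = C q * X⁻¹) {u v : RatFunc K} (hu : u ≠ 0) (hv : v ≠ 0)
    (h₁ : ι₁ v = -(u * v)) (h₂ : ι₂ v = -v) {c : K} (hc : c ≠ 0) :
    orderAt v (q * c) = orderAt u c + orderAt v c := by
  have hι₁' : ι₁ X = C 1 * X⁻¹ := by rw [hι₁, map_one, one_mul]
  calc orderAt v (q * c)
      = orderAt (ι₂ v) c⁻¹ := by rw [orderAt_map hq hι₂ hv (inv_ne_zero hc), div_inv_eq_mul]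
    _ = orderAt (ι₁ v) c := by rw [h₂, orderAt_neg, orderAt_map one_ne_zero hι₁' hv hc, one_div]
    _ = orderAt u c + orderAt v c := by rw [h₁, orderAt_neg, orderAt_mul hu hv]

end RatFunc

theorem Monotone.eq_zero_of_finite_support {α : Type*} [PartialOrder α] [Zero α] {g : ℤ → α}
    (hg : Monotone g) (hfin : (Function.support g).Finite) (n : ℤ) : g n = 0 := by
  obtain ⟨m, hmn, hm⟩ := ((Set.Iic_infinite n).sdiff hfin).nonempty
  obtain ⟨k, hnk, hk⟩ := ((Set.Ici_infinite n).sdiff hfin).nonempty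
  rw [Function.notMem_support] at hm hk
  exact le_antisymm (hk ▸ hg hnk) (hm ▸ hg hmn)

theorem Antitone.eq_zero_of_finite_support {α : Type*} [PartialOrder α] [Zero α] {g : ℤ → α}
    (hg : Antitone g) (hfin : (Function.support g).Finite) (n : ℤ) : g n = 0 :=
  Monotone.eq_zero_of_finite_support (α := αᵒᵈ) hg hfin n

theorem injective_zpow_of_pow_ne_one {G₀ : Type*} [GroupWithZero G₀] {q : G₀} (hq : q ≠ 0)
    (hroot : ∀ n : ℕ, 1 ≤ n → q ^ n ≠ 1) : Function.Injective fun n : ℤ => q ^ n := by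
  have hu : ¬ IsOfFinOrder (Units.mk0 q hq) := fun h => by
    obtain ⟨n, hn, hqn⟩ := isOfFinOrder_iff_pow_eq_one.mp h
    exact hroot n hn (by simpa using congrArg Units.val hqn)
  intro m n hmn
  exact injective_zpow_iff_not_isOfFinOrder.mpr hu (Units.ext (by simpa using hmn))

theorem statement8 (q : ℂ) (hq : q ≠ 0) (hroot : ∀ n : ℕ, 1 ≤ n → q ^ n ≠ 1)
    (ι₁ ι₂ : RatFunc ℂ ≃ₐ[ℂ] RatFunc ℂ)
    (hι₁ : ι₁ RatFunc.X = RatFunc.X⁻¹)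
    (hι₂ : ι₂ RatFunc.X = RatFunc.C q * RatFunc.X⁻¹)
    (γ₁ γ₂ : RatFunc ℂ) (hγ₁ : γ₁ ≠ 0) (hγ₂ : γ₂ ≠ 0)
    (hcrit : ∃ a : ℂ, a ≠ 0 ∧
      ((IsPole (ι₁ (γ₁ / γ₂) / (γ₁ / γ₂)) a ∧
          ∀ n : ℤ, ¬ IsZero (ι₁ (γ₁ / γ₂) / (γ₁ / γ₂)) (q ^ n * a)) ∨
        (IsZero (ι₁ (γ₁ / γ₂) / (γ₁ / γ₂)) a ∧
          ∀ n : ℤ, ¬ IsPole (ι₁ (γ₁ / γ₂) / (γ₁ / γ₂)) (q ^ n * a)))) :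
    ∀ h₁ h₂ : RatFunc ℂ, γ₁ * h₁ + γ₂ * h₂ = 0 →
      ι₁ h₁ = -h₁ → ι₂ h₂ = -h₂ → h₁ = 0 ∧ h₂ = 0 := by
  intro h₁ h₂ heq hh₁ hh₂
  obtain ⟨a, ha, hcrit⟩ := hcrit
  set γ := γ₁ / γ₂
  set u := ι₁ γ / γ
  have hγ : γ ≠ 0 := div_ne_zero hγ₁ hγ₂
  have hu : u ≠ 0 := div_ne_zero ((map_ne_zero ι₁).mpr hγ) hγ
  have hh₂_eq : h₂ = -(γ * h₁) := by
    simp only [γ]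
    field_simp
    linear_combination heq
  suffices hh₁0 : h₁ = 0 from ⟨hh₁0, by rw [hh₂_eq, hh₁0, mul_zero, neg_zero]⟩
  by_contra hh₁0
  have hv : γ * h₁ ≠ 0 := mul_ne_zero hγ hh₁0
  set g := fun n : ℤ => (γ * h₁).orderAt (q ^ n * a)
  have hg : ∀ n : ℤ, g (n + 1) = u.orderAt (q ^ n * a) + g n := fun n => by
    simp only [g, zpow_add_one₀ hq, mul_comm _ q, mul_assoc]
    refine RatFunc.orderAt_mul_point_eq_add hq hι₁ hι₂ hu hv ?_ ?_
      (mul_ne_zero (zpow_ne_zero n hq) ha)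
    · rw [map_mul, hh₁, ← mul_assoc, div_mul_cancel₀ _ hγ, mul_neg]
    · rw [← neg_eq_iff_eq_neg.mpr hh₂_eq, map_neg, hh₂, neg_neg]
  have hfin : (Function.support g).Finite := (RatFunc.finite_support_orderAt _).preimage
    ((mul_left_injective₀ ha).comp (injective_zpow_of_pow_ne_one hq hroot)).injOn
  have hmono : Antitone g ∨ Monotone g := hcrit.imp
    (fun h => antitone_int_of_succ_le fun n => by
      rw [hg]; linarith [RatFunc.orderAt_nonpos (h.2 n)])
    (fun h => monotone_int_of_le_succ fun n => by
      rw [hg]; linarith [RatFunc.orderAt_nonneg (h.2 n)])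
  have hg0 : ∀ n, g n = 0 :=
    hmono.elim (·.eq_zero_of_finite_support hfin) (·.eq_zero_of_finite_support hfin)
  refine RatFunc.orderAt_ne_zero hu (hcrit.symm.imp (·.1) (·.1)) ?_
  simpa [hg0] using (hg 0).symm
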